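/- Let E be the set of even numbers. For any permutation π of ℕ, the set of x ∈ 2^ℕ (identified with subsets of ℕ) such that limsup_n |π[φ(x)] ∩ [0,n)|/n ≥ 1/2 and liminf_n |π[φ(x)] ∩ [0,n)|/n ≤ 1/2 is comeager in 2^ℕ, where φ(x) ⊆ ℕ is defined by: 2n ∈ φ(x) iff x(n)=1, and 2n+1 ∈ φ(x) iff x(n)=0. -/

import Mathlib

/-!
Each pair `{2i, 2i+1}` meets `φ(x)` in exactly one point. Suppose that from some index on, `x`
picks the point of the pair with the smaller `π`-image. Then, outside a finite set, the map
`m ↦ π(partner(π⁻¹ m))` injects the complement of `B = π[φ(x)]` into `B` and lowers every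
point, so `|B ∩ [0,n)| ≥ n/2 - C`. Picking the larger image gives `|B ∩ [0,n)| ≤ n/2 + C`
in the same way. Each of these conditions leaves the first coordinates of `x` arbitrary,
so the sets `{x | ∃ n ≥ N, |B ∩ [0,n)|/n > 1/2 - 1/(k+1)}` and their upper analogues are
dense. They are also open, because the counts depend on only finitely many coordinates.
By the Baire category theorem, their intersection is comeager.
-/

open Filter Topology

open scoped Classical in
noncomputable def cnt (A : Set ℕ) (n : ℕ) : ℕ :=
  ((Finset.range n).filter (fun m => m ∈ A)).card

open scoped Classical in
noncomputable def cntIn (A : Set ℕ) (a b : ℕ) : ℕ :=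
  ((Finset.Ico a b).filter (fun m => m ∈ A)).card

def dens (A : Set ℕ) (r : ℝ) : Prop :=
  Tendsto (fun n => (cnt A n : ℝ) / n) atTop (𝓝 r)

def phi (x : ℕ → Bool) : Set ℕ :=
  {m | (m % 2 = 0 ∧ x (m / 2) = true) ∨ (m % 2 = 1 ∧ x (m / 2) = false)}

open Function

def partner (j : ℕ) : ℕ := if j % 2 = 0 then j + 1 else j - 1

lemma partner_involutive : Involutive partner := fun j => by
  unfold partner; split_ifs <;> omega

lemma partner_ne (j : ℕ) : partner j ≠ j := by
  unfold partner; split_ifs <;> omega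

lemma mem_phi_iff {x : ℕ → Bool} {j : ℕ} : j ∈ phi x ↔ x (j / 2) = decide (j % 2 = 0) := by
  simp only [phi, Set.mem_ofPred_eq]
  cases x (j / 2) <;> simp

lemma mem_phi_congr {x y : ℕ → Bool} {j : ℕ} (h : x (j / 2) = y (j / 2)) :
    j ∈ phi x ↔ j ∈ phi y := by
  rw [mem_phi_iff, mem_phi_iff, h]

lemma partner_mem_phi {x : ℕ → Bool} {j : ℕ} : partner j ∈ phi x ↔ j ∉ phi x := by
  rw [mem_phi_iff, mem_phi_iff]
  unfold partner
  split_ifs with h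
  · rw [show (j + 1) / 2 = j / 2 by omega]; cases x (j / 2) <;> simp <;> omega
  · rw [show (j - 1) / 2 = j / 2 by omega]; cases x (j / 2) <;> simp <;> omega

lemma phi_not (x : ℕ → Bool) : phi (fun i => !x i) = (phi x)ᶜ := by
  ext j
  simp only [mem_phi_iff, Set.mem_compl_iff]
  cases x (j / 2) <;> cases decide (j % 2 = 0) <;> decide

def minImageChoice (π : Equiv.Perm ℕ) (i : ℕ) : Bool := decide (π (2 * i) < π (2 * i + 1))

lemma mem_phi_minImageChoice (π : Equiv.Perm ℕ) (j : ℕ) :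
    j ∈ phi (minImageChoice π) ↔ π j < π (partner j) := by
  have hne : π (2 * (j / 2)) ≠ π (2 * (j / 2) + 1) := π.injective.ne (by omega)
  rw [mem_phi_iff, minImageChoice]
  unfold partner
  split_ifs with h
  · rw [show 2 * (j / 2) = j by omega] at hne ⊢; simp [h]
  · rw [show 2 * (j / 2) = j - 1 by omega, show j - 1 + 1 = j by omega] at hne ⊢
    simp only [h, decide_false, decide_eq_false_iff_not, not_lt]
    exact ⟨fun h' => lt_of_le_of_ne h' hne.symm, le_of_lt⟩

lemma cnt_add_cnt_compl (A : Set ℕ) (n : ℕ) : cnt A n + cnt Aᶜ n = n := by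
  classical
  unfold cnt
  simpa using Finset.card_filter_add_card_filter_not (s := Finset.range n) (· ∈ A)

lemma cnt_le (A : Set ℕ) (n : ℕ) : cnt A n ≤ n :=
  (Nat.le_add_right _ _).trans_eq (cnt_add_cnt_compl A n)

open scoped Classical in
lemma cnt_compl_le_cnt_add {B : Set ℕ} (F : Finset ℕ) {f : ℕ → ℕ} (hf : Injective f)
    (h : ∀ m ∉ B, m ∉ F → f m ∈ B ∧ f m < m) (n : ℕ) : cnt Bᶜ n ≤ cnt B n + F.card := by
  set s := (Finset.range n).filter (· ∉ B)
  have hs : cnt Bᶜ n = s.card := by unfold cnt; convert rfl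
  have h_in_F : (s.filter (· ∈ F)).card ≤ F.card :=
    Finset.card_le_card fun m hm => (Finset.mem_filter.1 hm).2
  have h_inj : (s.filter (· ∉ F)).card ≤ ((Finset.range n).filter (· ∈ B)).card := by
    refine Finset.card_le_card_of_injOn f (fun m hm => ?_) hf.injOn
    rw [Finset.mem_coe, Finset.mem_filter, Finset.mem_filter, Finset.mem_range] at hm
    obtain ⟨⟨hmn, hmB⟩, hmF⟩ := hm
    obtain ⟨hfB, hfm⟩ := h m hmB hmF
    rw [Finset.mem_coe, Finset.mem_filter, Finset.mem_range]
    exact ⟨hfm.trans hmn, hfB⟩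
  have h_split := Finset.card_filter_add_card_filter_not (s := s) (· ∈ F)
  rw [hs, cnt]
  omega

lemma exists_cnt_compl_le_of_eventually_eq (π : Equiv.Perm ℕ) {y : ℕ → Bool}
    (hy : ∀ᶠ i in atTop, y i = minImageChoice π i) :
    ∃ C, ∀ n, cnt (π '' phi y)ᶜ n ≤ cnt (π '' phi y) n + C := by
  obtain ⟨M, hM⟩ := eventually_atTop.1 hy
  refine ⟨_, cnt_compl_le_cnt_add ((Finset.range (2 * M)).map π.toEmbedding)
    (f := π ∘ partner ∘ π.symm)
    (π.injective.comp (partner_involutive.injective.comp π.symm.injective))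
    fun m hmB hmF => ?_⟩
  set j := π.symm m
  have hj : π j = m := π.apply_symm_apply m
  have hjy : j ∉ phi y := by rwa [Set.mem_image_equiv] at hmB
  have hjM : M ≤ j / 2 := by
    by_contra! hlt
    exact hmF (Finset.mem_map_equiv.2 (Finset.mem_range.2 (by omega)))
  have hjz : ¬ π j < π (partner j) := by
    rwa [← mem_phi_minImageChoice, ← mem_phi_congr (hM _ hjM)]
  refine ⟨Set.mem_image_of_mem π (partner_mem_phi.2 hjy), ?_⟩
  calc π (partner j) < π j := lt_of_le_of_ne (not_lt.1 hjz) (π.injective.ne (partner_ne j))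
    _ = m := hj

lemma eventually_half_sub_lt_cnt_div {A : Set ℕ} {C : ℕ} (h : ∀ n, cnt Aᶜ n ≤ cnt A n + C)
    {ε : ℝ} (hε : 0 < ε) : ∀ᶠ n : ℕ in atTop, 1 / 2 - ε < (cnt A n : ℝ) / n := by
  filter_upwards [(tendsto_natCast_atTop_atTop.const_mul_atTop hε).eventually_gt_atTop (C : ℝ),
    eventually_gt_atTop 0] with n hC hn
  have hn0 : (0 : ℝ) < n := by exact_mod_cast hn
  have hsum : (cnt A n : ℝ) + cnt Aᶜ n = n := by exact_mod_cast cnt_add_cnt_compl A n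
  have hle : (cnt Aᶜ n : ℝ) ≤ cnt A n + C := by exact_mod_cast h n
  rw [lt_div_iff₀ hn0]
  linarith

lemma eventually_cnt_div_lt_half_add {A : Set ℕ} {C : ℕ} (h : ∀ n, cnt A n ≤ cnt Aᶜ n + C)
    {ε : ℝ} (hε : 0 < ε) : ∀ᶠ n : ℕ in atTop, (cnt A n : ℝ) / n < 1 / 2 + ε := by
  filter_upwards [(tendsto_natCast_atTop_atTop.const_mul_atTop hε).eventually_gt_atTop (C : ℝ),
    eventually_gt_atTop 0] with n hC hn
  have hn0 : (0 : ℝ) < n := by exact_mod_cast hn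
  have hsum : (cnt A n : ℝ) + cnt Aᶜ n = n := by exact_mod_cast cnt_add_cnt_compl A n
  have hle : (cnt A n : ℝ) ≤ cnt Aᶜ n + C := by exact_mod_cast h n
  rw [div_lt_iff₀ hn0]
  linarith

lemma dense_of_forall_eventuallyEq_mem {β : Type*} [TopologicalSpace β] {S : Set (ℕ → β)}
    (z : ℕ → β) (h : ∀ y : ℕ → β, (∀ᶠ i in atTop, y i = z i) → y ∈ S) : Dense S := by
  intro x
  let y : ℕ → ℕ → β := fun M i => if i < M then x i else z i
  have hy : Tendsto y atTop (𝓝 x) := tendsto_pi_nhds.2 fun i =>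
    tendsto_const_nhds.congr' ((eventually_gt_atTop i).mono fun M hM => (if_pos hM).symm)
  exact mem_closure_of_tendsto hy (Eventually.of_forall fun M =>
    h _ ((eventually_ge_atTop M).mono fun i hi => if_neg (not_lt.2 hi)))

lemma dense_setOf_exists_half_sub_lt_cnt_div (π : Equiv.Perm ℕ) {ε : ℝ} (hε : 0 < ε) (N : ℕ) :
    Dense {x : ℕ → Bool | ∃ n ≥ N, 1 / 2 - ε < (cnt (π '' phi x) n : ℝ) / n} :=
  dense_of_forall_eventuallyEq_mem (minImageChoice π) fun y hy => by
    obtain ⟨C, hC⟩ := exists_cnt_compl_le_of_eventually_eq π hy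
    exact ((eventually_ge_atTop N).and (eventually_half_sub_lt_cnt_div hC hε)).exists

lemma dense_setOf_exists_cnt_div_lt_half_add (π : Equiv.Perm ℕ) {ε : ℝ} (hε : 0 < ε) (N : ℕ) :
    Dense {x : ℕ → Bool | ∃ n ≥ N, (cnt (π '' phi x) n : ℝ) / n < 1 / 2 + ε} :=
  dense_of_forall_eventuallyEq_mem (fun i => !minImageChoice π i) fun y hy => by
    obtain ⟨C, hC⟩ := exists_cnt_compl_le_of_eventually_eq π (y := fun i => !y i)
      (hy.mono fun i hi => by simp [hi])
    rw [phi_not, Set.image_compl_eq π.bijective, compl_compl] at hC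
    exact ((eventually_ge_atTop N).and (eventually_cnt_div_lt_half_add hC hε)).exists

lemma continuous_cnt {X : Type*} [TopologicalSpace X] {S : X → Set ℕ}
    (hS : ∀ m, IsClopen {x | m ∈ S x}) (n : ℕ) : Continuous fun x => cnt (S x) n := by
  have h : (fun x => cnt (S x) n) =
      fun x => ∑ m ∈ Finset.range n, {x | m ∈ S x}.indicator 1 x := by
    ext x
    rw [cnt, Finset.card_filter]
    rfl
  rw [h]
  exact continuous_finsetSum _ fun m _ =>
    continuous_const.indicator (by simp [(hS m).frontier_eq])

lemma isClopen_setOf_mem_image_phi (π : Equiv.Perm ℕ) (m : ℕ) :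
    IsClopen {x : ℕ → Bool | m ∈ π '' phi x} := by
  simp_rw [Set.mem_image_equiv, mem_phi_iff]
  exact (isClopen_discrete {_}).preimage (continuous_apply _)

lemma continuous_cnt_image_phi_div (π : Equiv.Perm ℕ) (n : ℕ) :
    Continuous fun x : ℕ → Bool => (cnt (π '' phi x) n : ℝ) / n :=
  (continuous_of_discreteTopology (f := fun c : ℕ => (c : ℝ) / n)).comp
    (continuous_cnt (isClopen_setOf_mem_image_phi π) n)

lemma residual_setOf_forall_frequently {X : Type*} [TopologicalSpace X] [BaireSpace X]
    {P : ℕ → ℕ → X → Prop} (hopen : ∀ k n, IsOpen {x | P k n x})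
    (hdense : ∀ k N, Dense {x | ∃ n ≥ N, P k n x}) :
    {x | ∀ k, ∃ᶠ n in atTop, P k n x} ∈ residual X := by
  have h : {x | ∀ k, ∃ᶠ n in atTop, P k n x} = ⋂ k, ⋂ N, {x | ∃ n ≥ N, P k n x} := by
    ext x; simp [frequently_atTop]
  rw [h, countable_iInter_mem]
  refine fun k => countable_iInter_mem.2 fun N => residual_of_dense_open ?_ (hdense k N)
  convert isOpen_biUnion fun n (_ : n ∈ Set.Ici N) => hopen k n using 1
  ext x; simp

lemma le_limsup_of_forall_frequently_sub_lt {ι : Type*} {f : Filter ι} {u : ι → ℝ} {a : ℝ}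
    (hu : IsBoundedUnder (· ≤ ·) f u) (h : ∀ k : ℕ, ∃ᶠ i in f, a - 1 / (k + 1) < u i) :
    a ≤ limsup u f := by
  refine le_of_forall_sub_le fun ε hε => ?_
  obtain ⟨k, hk⟩ := exists_nat_one_div_lt hε
  exact le_limsup_of_frequently_le ((h k).mono fun i hi => by linarith) hu

lemma liminf_le_of_forall_frequently_lt_add {ι : Type*} {f : Filter ι} {u : ι → ℝ} {a : ℝ}
    (hu : IsBoundedUnder (· ≥ ·) f u) (h : ∀ k : ℕ, ∃ᶠ i in f, u i < a + 1 / (k + 1)) :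
    liminf u f ≤ a := by
  refine le_of_forall_pos_le_add fun ε hε => ?_
  obtain ⟨k, hk⟩ := exists_nat_one_div_lt hε
  exact liminf_le_of_frequently_le ((h k).mono fun i hi => by linarith) hu

theorem stmt10 (π : Equiv.Perm ℕ) :
    {x : ℕ → Bool |
      (1 : ℝ) / 2 ≤ Filter.limsup (fun n => (cnt (π '' phi x) n : ℝ) / n) atTop ∧
      Filter.liminf (fun n => (cnt (π '' phi x) n : ℝ) / n) atTop ≤ (1 : ℝ) / 2} ∈
      residual (ℕ → Bool) := by
  have hε (k : ℕ) : (0 : ℝ) < 1 / (k + 1) := by positivity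
  have hlower := residual_setOf_forall_frequently
    (fun k n => isOpen_lt continuous_const (continuous_cnt_image_phi_div π n))
    (fun k => dense_setOf_exists_half_sub_lt_cnt_div π (hε k))
  have hupper := residual_setOf_forall_frequently
    (fun k n => isOpen_lt (continuous_cnt_image_phi_div π n) continuous_const)
    (fun k => dense_setOf_exists_cnt_div_lt_half_add π (hε k))
  filter_upwards [hlower, hupper] with x hx_lower hx_upper
  have h_nonneg (n : ℕ) : 0 ≤ (cnt (π '' phi x) n : ℝ) / n := by positivity
  have h_le_one (n : ℕ) : (cnt (π '' phi x) n : ℝ) / n ≤ 1 :=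
    div_le_one_of_le₀ (by exact_mod_cast cnt_le _ n) n.cast_nonneg
  exact ⟨le_limsup_of_forall_frequently_sub_lt (isBoundedUnder_of ⟨1, h_le_one⟩) hx_lower,
    liminf_le_of_forall_frequently_lt_add (isBoundedUnder_of ⟨0, h_nonneg⟩) hx_upper⟩
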